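/- arXiv:1210.2057 — 2 statements merged into one kernel-verified Lean document; each statement's English description precedes it below -/
import Mathlib

section
/- With the notation of the previous construction (tent functions $r_k$ with disjoint supports $[2^{-l_k}, 2^{-l_k+1}]$, peak heights $c_k = (\sum_{j=1}^k 1/\lambda_j)^{-1/4}$, and $r(x,y) = \sum_k r_k(x) r_k(y)$, where $\{\lambda_j\}$ is nondecreasing positive with $\sum_j 1/\lambda_j = \infty$): for every $k$, $\sum_{j=1}^k \frac{|r(2^{-l_j}, 3 \cdot 2^{-l_j-1}) - r(3 \cdot 2^{-l_j-1}, 3 \cdot 2^{-l_j-1})|}{\lambda_j} \geq \left(\sum_{j=1}^k \frac{1}{\lambda_j}\right)^{1/2}$. Consequently $\sup_{\{y_i\}, \{I_i\}} \sum_i |r(I_i, y_i)|/\lambda_i = \infty$, i.e., $r \notin \Lambda^{\#}BV$. -/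
/-- A finite collection of `m` nonoverlapping open subintervals `(a i, b i)` of `[0,1]`. -/
def Nonoverlap (m : ℕ) (a b : ℕ → ℝ) : Prop :=
  (∀ i < m, 0 ≤ a i ∧ a i < b i ∧ b i ≤ 1) ∧
  ∀ i < m, ∀ j < m, i ≠ j → Set.Ioo (a i) (b i) ∩ Set.Ioo (a j) (b j) = ∅

/-- `Λ^{#}V_1(f) ≤ M`: all Waterman-type sums in the first variable, with a separate
point `y i` for each interval, are bounded by `M`. -/
def LamSharpV1 (lam : ℕ → ℝ) (f : ℝ → ℝ → ℝ) (M : ℝ) : Prop :=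
  ∀ (m : ℕ) (a b y : ℕ → ℝ), Nonoverlap m a b → (∀ i < m, y i ∈ Set.Icc (0:ℝ) 1) →
    ∑ i ∈ Finset.range m, |f (b i) (y i) - f (a i) (y i)| / lam i ≤ M

/-- `Λ^{#}V_2(f) ≤ M`: the symmetric condition in the second variable. -/
def LamSharpV2 (lam : ℕ → ℝ) (f : ℝ → ℝ → ℝ) (M : ℝ) : Prop :=
  ∀ (m : ℕ) (a b x : ℕ → ℝ), Nonoverlap m a b → (∀ i < m, x i ∈ Set.Icc (0:ℝ) 1) →
    ∑ i ∈ Finset.range m, |f (x i) (b i) - f (x i) (a i)| / lam i ≤ M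

/-- The class `Λ^{#}BV`. -/
def LamSharpBV (lam : ℕ → ℝ) (f : ℝ → ℝ → ℝ) : Prop :=
  ∃ M : ℝ, LamSharpV1 lam f M ∧ LamSharpV2 lam f M

/-- `V_1^{#}(f, p(n) ↑ ∞) ≤ M`: for every `n`, every collection of nonoverlapping
intervals of lengths at least `2⁻ⁿ` and every choice of points `y i`, the `ℓ^{p(n)}`
sum of increments in the first variable is at most `M`. -/
def BVSharpV1 (p : ℕ → ℝ) (f : ℝ → ℝ → ℝ) (M : ℝ) : Prop :=
  ∀ (n m : ℕ) (a b y : ℕ → ℝ), Nonoverlap m a b →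
    (∀ i < m, 1 / 2 ^ n ≤ b i - a i) →
    (∀ i < m, y i ∈ Set.Icc (0:ℝ) 1) →
    (∑ i ∈ Finset.range m, |f (b i) (y i) - f (a i) (y i)| ^ p n) ^ (1 / p n) ≤ M

/-- `V_2^{#}(f, p(n) ↑ ∞) ≤ M`: the symmetric condition in the second variable. -/
def BVSharpV2 (p : ℕ → ℝ) (f : ℝ → ℝ → ℝ) (M : ℝ) : Prop :=
  ∀ (n m : ℕ) (a b x : ℕ → ℝ), Nonoverlap m a b →
    (∀ i < m, 1 / 2 ^ n ≤ b i - a i) →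
    (∀ i < m, x i ∈ Set.Icc (0:ℝ) 1) →
    (∑ i ∈ Finset.range m, |f (x i) (b i) - f (x i) (a i)| ^ p n) ^ (1 / p n) ≤ M

/-- The class `BV^{#}(p(n) ↑ ∞)`. -/
def BVSharp (p : ℕ → ℝ) (f : ℝ → ℝ → ℝ) : Prop :=
  ∃ M : ℝ, BVSharpV1 p f M ∧ BVSharpV2 p f M

/-- The tent function of height `c` supported on `[2^{-lk}, 2^{-lk+1}]`, vanishing at the
endpoints and attaining its peak `c` at `3·2^{-lk-1}`. -/
noncomputable def tent (lk : ℕ) (c : ℝ) (x : ℝ) : ℝ :=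
  if 1 / 2 ^ lk ≤ x ∧ x ≤ 3 / 2 ^ (lk + 1) then 2 ^ (lk + 1) * c * (x - 1 / 2 ^ lk)
  else if 3 / 2 ^ (lk + 1) ≤ x ∧ x ≤ 2 / 2 ^ lk then -(2 ^ (lk + 1)) * c * (x - 2 / 2 ^ lk)
  else 0

/-- `c_k = (∑_{j=1}^k 1/λ_j)^{-1/4}` (indices shifted to start at 0). -/
noncomputable def csum (lam : ℕ → ℝ) (k : ℕ) : ℝ :=
  (∑ j ∈ Finset.range (k + 1), 1 / lam j) ^ (-(1 / 4 : ℝ))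

/-- `r(x,y) = ∑_k r_k(x) r_k(y)` where `r_k = tent (l k) (c k)`. -/
noncomputable def rfun (lam : ℕ → ℝ) (l : ℕ → ℕ) (x y : ℝ) : ℝ :=
  ∑' k : ℕ, tent (l k) (csum lam k) x * tent (l k) (csum lam k) y

lemma tent_lt {lk : ℕ} {x : ℝ} (c : ℝ) (h : x < 1 / 2 ^ lk) : tent lk c x = 0 := by
  have h2 : (0:ℝ) < 2 ^ lk := by positivity
  have h3 : (1:ℝ) / 2 ^ lk ≤ 3 / 2 ^ (lk + 1) := by
    rw [div_le_div_iff₀ (by positivity) (by positivity), pow_succ]; nlinarith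
  unfold tent
  rw [if_neg, if_neg] <;> push_neg <;> intro hc <;> linarith

lemma tent_gt {lk : ℕ} {x : ℝ} (c : ℝ) (h : 2 / 2 ^ lk < x) : tent lk c x = 0 := by
  have h2 : (0:ℝ) < 2 ^ lk := by positivity
  have h3 : (3:ℝ) / 2 ^ (lk + 1) ≤ 2 / 2 ^ lk := by
    rw [div_le_div_iff₀ (by positivity) (by positivity), pow_succ]; nlinarith
  unfold tent
  rw [if_neg, if_neg] <;> push_neg <;> intro hc <;> linarith

lemma tent_left (lk : ℕ) (c : ℝ) : tent lk c (1 / 2 ^ lk) = 0 := by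
  have h2 : (0:ℝ) < 2 ^ lk := by positivity
  have h3 : (1:ℝ) / 2 ^ lk ≤ 3 / 2 ^ (lk + 1) := by
    rw [div_le_div_iff₀ (by positivity) (by positivity), pow_succ]; nlinarith
  unfold tent
  rw [if_pos ⟨le_refl _, h3⟩]; ring

lemma tent_right (lk : ℕ) (c : ℝ) : tent lk c (2 / 2 ^ lk) = 0 := by
  have h2 : (0:ℝ) < 2 ^ lk := by positivity
  have h3 : (3:ℝ) / 2 ^ (lk + 1) ≤ 2 / 2 ^ lk := by
    rw [div_le_div_iff₀ (by positivity) (by positivity), pow_succ]; nlinarith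
  have h4 : ¬ ((2:ℝ) / 2 ^ lk ≤ 3 / 2 ^ (lk + 1)) := by
    rw [div_le_div_iff₀ (by positivity) (by positivity), pow_succ]
    push_neg; nlinarith
  unfold tent
  rw [if_neg (by tauto), if_pos ⟨h3, le_refl _⟩]; ring

lemma tent_peak (lk : ℕ) (c : ℝ) : tent lk c (3 / 2 ^ (lk + 1)) = c := by
  have h2 : (0:ℝ) < 2 ^ lk := by positivity
  have h3 : (1:ℝ) / 2 ^ lk ≤ 3 / 2 ^ (lk + 1) := by
    rw [div_le_div_iff₀ (by positivity) (by positivity), pow_succ]; nlinarith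
  unfold tent
  rw [if_pos ⟨h3, le_refl _⟩]
  have h5 : (0:ℝ) < 2 ^ (lk+1) := by positivity
  field_simp
  rw [pow_succ]; ring

lemma tent_peak_other {lk lj : ℕ} (c : ℝ) (hne : lk ≠ lj) :
    tent lk c (3 / 2 ^ (lj + 1)) = 0 := by
  rcases lt_or_gt_of_ne hne with h | h
  · apply tent_lt
    have : (4:ℝ) * 2 ^ lk ≤ 2 ^ (lj + 1) := by
      calc (4:ℝ) * 2 ^ lk = 2 ^ (lk + 2) := by ring
      _ ≤ 2 ^ (lj + 1) := pow_le_pow_right₀ (by norm_num) (by omega)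
    rw [div_lt_div_iff₀ (by positivity) (by positivity)]
    nlinarith [pow_pos (show (0:ℝ) < 2 by norm_num) lk]
  · apply tent_gt
    have : (2:ℝ) ^ (lj + 1) ≤ 2 ^ lk := pow_le_pow_right₀ (by norm_num) (by omega)
    rw [div_lt_div_iff₀ (by positivity) (by positivity)]
    nlinarith [pow_pos (show (0:ℝ) < 2 by norm_num) (lj+1)]

lemma tent_left_other (lk lj : ℕ) (c : ℝ) : tent lk c (1 / 2 ^ lj) = 0 := by
  rcases lt_trichotomy lk lj with h | h | h
  · apply tent_lt
    have h1 : (2:ℝ) ^ (lk + 1) ≤ 2 ^ lj := pow_le_pow_right₀ (by norm_num) (by omega)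
    rw [div_lt_div_iff₀ (by positivity) (by positivity)]
    rw [pow_succ] at h1
    nlinarith [pow_pos (show (0:ℝ) < 2 by norm_num) lk]
  · rw [h]; exact tent_left lj c
  · rcases Nat.lt_or_ge (lj + 1) lk with h2 | h2
    · apply tent_gt
      have h1 : (2:ℝ) ^ (lj + 2) ≤ 2 ^ lk := pow_le_pow_right₀ (by norm_num) (by omega)
      rw [div_lt_div_iff₀ (by positivity) (by positivity)]
      have : (2:ℝ) ^ (lj + 2) = 4 * 2 ^ lj := by ring
      nlinarith [pow_pos (show (0:ℝ) < 2 by norm_num) lj]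
    · have : lk = lj + 1 := by omega
      subst this
      have : (1:ℝ) / 2 ^ lj = 2 / 2 ^ (lj + 1) := by
        rw [pow_succ]; rw [div_eq_div_iff (by positivity) (by positivity)]; ring
      rw [this]; exact tent_right (lj+1) c

lemma rfun_left (lam : ℕ → ℝ) (l : ℕ → ℕ) (j : ℕ) (y : ℝ) :
    rfun lam l (1 / 2 ^ l j) y = 0 := by
  unfold rfun
  have h : ∀ k : ℕ, tent (l k) (csum lam k) (1 / 2 ^ l j) * tent (l k) (csum lam k) y = 0 :=
    fun k => by rw [tent_left_other]; ring
  rw [tsum_congr h, tsum_zero]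

lemma rfun_peak (lam : ℕ → ℝ) {l : ℕ → ℕ} (hl : StrictMono l) (j : ℕ) :
    rfun lam l (3 / 2 ^ (l j + 1)) (3 / 2 ^ (l j + 1)) = csum lam j ^ 2 := by
  unfold rfun
  rw [tsum_eq_single j (fun k hk => by
    rw [tent_peak_other _ (fun h => hk (hl.injective h))]; ring)]
  rw [tent_peak]; ring

lemma disj_helper {p q : ℕ} (h : p < q) :
    Set.Ioo ((1:ℝ) / 2 ^ p) (3 / 2 ^ (p + 1)) ∩ Set.Ioo ((1:ℝ) / 2 ^ q) (3 / 2 ^ (q + 1)) = ∅ := by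
  have key : (3:ℝ) / 2 ^ (q + 1) ≤ 1 / 2 ^ p := by
    rw [div_le_div_iff₀ (by positivity) (by positivity)]
    have h1 : (2:ℝ) ^ (p + 2) ≤ 2 ^ (q + 1) := pow_le_pow_right₀ (by norm_num) (by omega)
    have h2 : (2:ℝ) ^ (p + 2) = 4 * 2 ^ p := by ring
    nlinarith [pow_pos (show (0:ℝ) < 2 by norm_num) p]
  rw [Set.eq_empty_iff_forall_notMem]
  rintro x ⟨⟨hx1, _⟩, ⟨_, hx4⟩⟩
  linarith

/-- for the tent construction `r`, the Waterman-type sums along the peaks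
are at least `(∑_{j=1}^k 1/λ_j)^{1/2}`; consequently `r ∉ Λ^{#}BV`. -/
theorem rfun_not_lamSharpBV
    (lam : ℕ → ℝ) (hmono : Monotone lam) (hpos : ∀ n, 0 < lam n)
    (hdiv : Filter.Tendsto (fun m => ∑ j ∈ Finset.range m, 1 / lam j)
      Filter.atTop Filter.atTop)
    (l : ℕ → ℕ) (hl : StrictMono l) (hl0 : l 0 = 1) :
    (∀ k : ℕ, 1 ≤ k →
      (∑ j ∈ Finset.range k, 1 / lam j) ^ ((1 : ℝ) / 2) ≤
        ∑ j ∈ Finset.range k,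
          |rfun lam l (1 / 2 ^ l j) (3 / 2 ^ (l j + 1)) -
            rfun lam l (3 / 2 ^ (l j + 1)) (3 / 2 ^ (l j + 1))| / lam j) ∧
    ¬ LamSharpBV lam (rfun lam l) := by
  set T : ℕ → ℝ := fun m => ∑ j ∈ Finset.range m, 1 / lam j with hT
  have hTpos : ∀ k : ℕ, 1 ≤ k → 0 < T k := fun k hk =>
    Finset.sum_pos (fun j _ => one_div_pos.mpr (hpos j)) (Finset.nonempty_range_iff.mpr (by omega))
  have hTmono : Monotone T := fun m n h =>
    Finset.sum_le_sum_of_subset_of_nonneg (Finset.range_subset_range.mpr h)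
      (fun j _ _ => le_of_lt (one_div_pos.mpr (hpos j)))
  have key : ∀ j : ℕ,
      |rfun lam l (1 / 2 ^ l j) (3 / 2 ^ (l j + 1)) -
        rfun lam l (3 / 2 ^ (l j + 1)) (3 / 2 ^ (l j + 1))| = T (j + 1) ^ (-(1/2) : ℝ) := by
    intro j
    rw [rfun_left, rfun_peak lam hl, zero_sub, abs_neg]
    have h1 : csum lam j ^ 2 = T (j + 1) ^ (-(1/2) : ℝ) := by
      unfold csum
      rw [← Real.rpow_natCast ((T (j+1)) ^ (-(1/4:ℝ))) 2,
        ← Real.rpow_mul (le_of_lt (hTpos (j+1) (by omega)))]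
      norm_num
    rw [h1, abs_of_nonneg (Real.rpow_nonneg (le_of_lt (hTpos (j+1) (by omega))) _)]
  have part1 : ∀ k : ℕ, 1 ≤ k →
      T k ^ ((1:ℝ)/2) ≤ ∑ j ∈ Finset.range k,
        |rfun lam l (1 / 2 ^ l j) (3 / 2 ^ (l j + 1)) -
          rfun lam l (3 / 2 ^ (l j + 1)) (3 / 2 ^ (l j + 1))| / lam j := by
    intro k hk
    have e1 : ∀ j ∈ Finset.range k,
        T k ^ (-(1/2):ℝ) / lam j ≤
          |rfun lam l (1 / 2 ^ l j) (3 / 2 ^ (l j + 1)) -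
            rfun lam l (3 / 2 ^ (l j + 1)) (3 / 2 ^ (l j + 1))| / lam j := by
      intro j hj
      rw [key j]
      have hb : T k ^ (-(1/2):ℝ) ≤ T (j+1) ^ (-(1/2):ℝ) :=
        Real.rpow_le_rpow_of_nonpos (hTpos (j+1) (by omega))
          (hTmono (Finset.mem_range.mp hj)) (by norm_num)
      exact div_le_div_of_nonneg_right hb (hpos j).le
    calc T k ^ ((1:ℝ)/2) = ∑ j ∈ Finset.range k, T k ^ (-(1/2):ℝ) / lam j := by
          rw [Finset.sum_congr rfl (fun j _ => div_eq_mul_one_div (T k ^ (-(1/2):ℝ)) (lam j)),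
            ← Finset.mul_sum]
          show T k ^ ((1:ℝ)/2) = T k ^ (-(1/2):ℝ) * T k
          conv_lhs => rw [show ((1:ℝ)/2) = -(1/2) + 1 by norm_num]
          rw [Real.rpow_add (hTpos k hk), Real.rpow_one]
      _ ≤ _ := Finset.sum_le_sum e1
  refine ⟨part1, ?_⟩
  rintro ⟨M, h1, -⟩
  obtain ⟨k, hk2, hk1⟩ :=
    ((hdiv.eventually_ge_atTop ((|M| + 1) ^ 2)).and (Filter.eventually_ge_atTop 1)).exists
  have hlge : ∀ i : ℕ, 1 ≤ l i := fun i => hl0 ▸ hl.monotone (Nat.zero_le i)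
  have hub : ∀ i : ℕ, (3:ℝ) / 2 ^ (l i + 1) ≤ 1 := by
    intro i
    rw [div_le_one (by positivity)]
    have : (2:ℝ) ^ 2 ≤ 2 ^ (l i + 1) := pow_le_pow_right₀ (by norm_num) (by have := hlge i; omega)
    nlinarith
  have hno : Nonoverlap k (fun j => 1 / 2 ^ l j) (fun j => 3 / 2 ^ (l j + 1)) := by
    constructor
    · intro i _
      refine ⟨by positivity, ?_, hub i⟩
      rw [div_lt_div_iff₀ (by positivity) (by positivity), pow_succ]
      nlinarith [pow_pos (show (0:ℝ) < 2 by norm_num) (l i)]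
    · intro i _ j _ hij
      rcases (hl.injective.ne hij).lt_or_gt with h | h
      · exact disj_helper h
      · rw [Set.inter_comm]; exact disj_helper h
  have hy : ∀ i < k, (3:ℝ) / 2 ^ (l i + 1) ∈ Set.Icc (0:ℝ) 1 :=
    fun i _ => ⟨by positivity, hub i⟩
  have hsum := h1 k (fun j => 1 / 2 ^ l j) (fun j => 3 / 2 ^ (l j + 1))
    (fun j => 3 / 2 ^ (l j + 1)) hno hy
  have hle : T k ^ ((1:ℝ)/2) ≤ M := by
    refine le_trans (part1 k hk1) (le_trans (le_of_eq ?_) hsum)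
    refine Finset.sum_congr rfl fun j _ => ?_
    rw [abs_sub_comm]
  have hge : |M| + 1 ≤ T k ^ ((1:ℝ)/2) := by
    have h2 : ((|M| + 1) ^ 2 : ℝ) ^ ((1:ℝ)/2) ≤ T k ^ ((1:ℝ)/2) :=
      Real.rpow_le_rpow (by positivity) hk2 (by norm_num)
    have h3 : ((|M| + 1) ^ 2 : ℝ) ^ ((1:ℝ)/2) = |M| + 1 := by
      rw [← Real.rpow_natCast (|M| + 1) 2, ← Real.rpow_mul (by positivity)]
      norm_num
    linarith
  have := abs_nonneg M
  have := le_abs_self M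
  linarith
end

section
/- Let $\{\lambda_n\}$ be a nondecreasing sequence of positive reals with $\sum_n 1/\lambda_n = \infty$. Suppose $\{h_k\}$ are positive reals and $\{m_k\}$ strictly increasing positive integers such that $\sum_{k=1}^\infty h_k^2 \sum_{j=1}^{m_k} (1/\lambda_j) < \infty$. Let $f_k : [0,1] \to \mathbb{R}$ be functions with $|f_k| \leq h_k$, each $f_k$ of total variation at most $4 h_k m_k$ and the supports of $f_k$ contained in $[(2m_{k-1}-1)2^{-s_k}, (2m_k+1)2^{-s_k}]$ pairwise disjoint. Then $f(x,y) := \sum_k f_k(x) f_k(y)$ satisfies $\sup_{\{y_i\}} \sup_{\{I_i\}} \sum_i |f(I_i, y_i)|/\lambda_i \leq 4 \sum_k h_k^2 \sum_{j=1}^{m_k}(1/\lambda_j) < \infty$, provided each $f_k$ changes sign at most once between consecutive dyadic points and $|f_k(I)| \leq 2h_k$ for every interval $I$; in particular $f \in \Lambda^{\#}BV$. -/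
open Finset

/-- strictly monotone map from `Fin n` to `ℕ` grows at least linearly -/
lemma finStrictMono_le {n : ℕ} (g : Fin n → ℕ) (hg : StrictMono g) (t : Fin n) :
    (t : ℕ) ≤ g t := by
  obtain ⟨v, hv⟩ := t
  induction v with
  | zero => exact Nat.zero_le _
  | succ v ih =>
    have hv' : v < n := Nat.lt_of_succ_lt hv
    have h1 : g ⟨v, hv'⟩ < g ⟨v + 1, hv⟩ := hg (by simp [Fin.lt_def])
    exact Nat.succ_le_of_lt (lt_of_le_of_lt (ih hv') h1)

lemma core_rearr (w D : ℕ → ℝ) (C : ℝ)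
    (hw0 : ∀ j, 0 ≤ w j) (hwa : ∀ i j : ℕ, i ≤ j → w j ≤ w i)
    (hD0 : ∀ t, 0 ≤ D t) (hDC : ∀ t, D t ≤ C) (T N : ℕ)
    (hmass : ∑ t ∈ Finset.range T, D t ≤ C * N) :
    ∑ t ∈ Finset.range T, D t * w t ≤ C * ∑ j ∈ Finset.range N, w j := by
  have hC : 0 ≤ C := le_trans (hD0 0) (hDC 0)
  rcases le_or_gt T N with hTN | hNT
  · calc ∑ t ∈ Finset.range T, D t * w t
        ≤ ∑ t ∈ Finset.range T, C * w t := by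
          refine Finset.sum_le_sum fun t _ => ?_
          exact mul_le_mul_of_nonneg_right (hDC t) (hw0 t)
      _ ≤ ∑ t ∈ Finset.range N, C * w t := by
          refine Finset.sum_le_sum_of_subset_of_nonneg
            (Finset.range_subset_range.2 hTN) fun t _ _ => mul_nonneg hC (hw0 t)
      _ = C * ∑ j ∈ Finset.range N, w j := by rw [Finset.mul_sum]
  · obtain ⟨L, hL⟩ : ∃ L, T = N + L := ⟨T - N, by omega⟩
    subst hL
    rw [Finset.sum_range_add] at hmass ⊢
    have h2 : ∑ t ∈ Finset.range L, D (N + t) * w (N + t)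
        ≤ (∑ t ∈ Finset.range L, D (N + t)) * w N := by
      rw [Finset.sum_mul]
      refine Finset.sum_le_sum fun t _ => ?_
      exact mul_le_mul_of_nonneg_left (hwa N (N + t) (Nat.le_add_right _ _)) (hD0 _)
    have h3 : (∑ t ∈ Finset.range L, D (N + t)) * w N
        ≤ (∑ t ∈ Finset.range N, (C - D t)) * w N := by
      refine mul_le_mul_of_nonneg_right ?_ (hw0 N)
      have : ∑ t ∈ Finset.range N, (C - D t) = C * N - ∑ t ∈ Finset.range N, D t := by
        rw [Finset.sum_sub_distrib, Finset.sum_const, Finset.card_range, nsmul_eq_mul]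
        ring
      rw [this]
      linarith
    have h4 : (∑ t ∈ Finset.range N, (C - D t)) * w N
        ≤ ∑ t ∈ Finset.range N, (C - D t) * w t := by
      rw [Finset.sum_mul]
      refine Finset.sum_le_sum fun t ht => ?_
      refine mul_le_mul_of_nonneg_left (hwa t N ?_) (by linarith [hDC t])
      exact le_of_lt (Finset.mem_range.1 ht)
    have h5 : ∑ t ∈ Finset.range N, D t * w t + ∑ t ∈ Finset.range N, (C - D t) * w t
        = C * ∑ j ∈ Finset.range N, w j := by
      rw [← Finset.sum_add_distrib, Finset.mul_sum]
      congr 1; ext t; ring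
    linarith

lemma rearr (w : ℕ → ℝ) (hw0 : ∀ j, 0 ≤ w j) (hwa : ∀ i j : ℕ, i ≤ j → w j ≤ w i)
    (C : ℝ) (hC : 0 ≤ C) (S : Finset ℕ) (d : ℕ → ℝ)
    (hd0 : ∀ i, 0 ≤ d i) (hdC : ∀ i, d i ≤ C) (N : ℕ)
    (hmass : ∑ i ∈ S, d i ≤ C * N) :
    ∑ i ∈ S, d i * w i ≤ C * ∑ j ∈ Finset.range N, w j := by
  classical
  set n := S.card with hn
  set e := S.orderEmbOfFin hn.symm with he
  set D : ℕ → ℝ := fun t => if ht : t < n then d (e ⟨t, ht⟩) else 0 with hD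
  have hbridge : ∀ F : ℕ → ℝ, ∑ i ∈ S, F i = ∑ t : Fin n, F (e t) := by
    intro F
    refine (Finset.sum_bij (fun t _ => e t) (fun t _ => S.orderEmbOfFin_mem hn.symm t)
      (fun t _ t' _ htt' => e.injective htt') (fun i hi => ?_) (fun t _ => rfl)).symm
    have : i ∈ Set.range e := by
      rw [Finset.range_orderEmbOfFin]; exact hi
    obtain ⟨t, ht⟩ := this
    exact ⟨t, Finset.mem_univ t, ht⟩
  have hkey : ∑ t : Fin n, d (e t) * w (e t) ≤ ∑ t : Fin n, d (e t) * w t := by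
    refine Finset.sum_le_sum fun t _ => ?_
    exact mul_le_mul_of_nonneg_left
      (hwa t (e t) (finStrictMono_le (fun u => e u) e.strictMono t)) (hd0 _)
  have hfin1 : ∑ t : Fin n, d (e t) * w t = ∑ t ∈ Finset.range n, D t * w t := by
    rw [← Fin.sum_univ_eq_sum_range (fun t => D t * w t) n]
    refine Finset.sum_congr rfl fun t _ => ?_
    have : D t = d (e t) := by
      rw [hD]; simp only [Fin.is_lt, dif_pos, Fin.eta]
    rw [this]
  have hfin2 : ∑ t ∈ Finset.range n, D t = ∑ i ∈ S, d i := by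
    rw [hbridge d, ← Fin.sum_univ_eq_sum_range (fun t => D t) n]
    refine Finset.sum_congr rfl fun t _ => ?_
    rw [hD]; simp only [Fin.is_lt, dif_pos, Fin.eta]
  have hD0 : ∀ t, 0 ≤ D t := by
    intro t; rw [hD]; dsimp only; split
    · exact hd0 _
    · exact le_refl 0
  have hDC : ∀ t, D t ≤ C := by
    intro t; rw [hD]; dsimp only; split
    · exact hdC _
    · exact hC
  calc ∑ i ∈ S, d i * w i = ∑ t : Fin n, d (e t) * w (e t) := hbridge _
    _ ≤ ∑ t : Fin n, d (e t) * w t := hkey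
    _ = ∑ t ∈ Finset.range n, D t * w t := hfin1
    _ ≤ C * ∑ j ∈ Finset.range N, w j := by
        refine core_rearr w D C hw0 hwa hD0 hDC n N ?_
        rw [hfin2]; exact hmass

lemma varsum (f : ℝ → ℝ) (a b : ℕ → ℝ) :
    ∀ (S : Finset ℕ) (u : ℝ),
      (∀ i ∈ S, 0 ≤ a i ∧ a i < b i ∧ b i ≤ u) →
      (∀ i ∈ S, ∀ j ∈ S, i ≠ j → Set.Ioo (a i) (b i) ∩ Set.Ioo (a j) (b j) = ∅) →
      ∑ i ∈ S, ENNReal.ofReal |f (b i) - f (a i)| ≤ eVariationOn f (Set.Icc 0 u) := by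
  intro S
  induction S using Finset.strongInduction with
  | _ S ih =>
    intro u hab hdis
    rcases S.eq_empty_or_nonempty with rfl | hne
    · simp
    obtain ⟨i0, hi0, hmax⟩ := S.exists_max_image a hne
    have hab0 := hab i0 hi0
    have hkey : ∀ j ∈ S.erase i0, b j ≤ a i0 := by
      intro j hj
      have hjS := Finset.mem_of_mem_erase hj
      have hne' := Finset.ne_of_mem_erase hj
      by_contra hcon
      push_neg at hcon
      have habj := hab j hjS
      have hdisj := hdis i0 hi0 j hjS hne'.symm
      set x := (a i0 + min (b i0) (b j)) / 2 with hx
      have hmin : a i0 < min (b i0) (b j) := lt_min hab0.2.1 hcon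
      have hx1 : x ∈ Set.Ioo (a i0) (b i0) := by
        constructor
        · rw [hx]; linarith
        · have := min_le_left (b i0) (b j); rw [hx]; linarith
      have hx2 : x ∈ Set.Ioo (a j) (b j) := by
        constructor
        · exact lt_of_le_of_lt (hmax j hjS) hx1.1
        · have := min_le_right (b i0) (b j); rw [hx]; linarith
      exact Set.notMem_empty x (hdisj ▸ Set.mem_inter hx1 hx2)
    have hIH := ih (S.erase i0) (Finset.erase_ssubset hi0) (a i0)
      (fun j hj => ⟨(hab j (Finset.mem_of_mem_erase hj)).1,
        (hab j (Finset.mem_of_mem_erase hj)).2.1, hkey j hj⟩)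
      (fun i hi j hj hij =>
        hdis i (Finset.mem_of_mem_erase hi) j (Finset.mem_of_mem_erase hj) hij)
    have hterm : ENNReal.ofReal |f (b i0) - f (a i0)|
        ≤ eVariationOn f (Set.Icc (a i0) u) := by
      rw [← Real.dist_eq, ← edist_dist]
      exact eVariationOn.edist_le f ⟨le_of_lt hab0.2.1, hab0.2.2⟩
        ⟨le_refl _, le_trans (le_of_lt hab0.2.1) hab0.2.2⟩
    calc ∑ i ∈ S, ENNReal.ofReal |f (b i) - f (a i)|
        = (∑ i ∈ S.erase i0, ENNReal.ofReal |f (b i) - f (a i)|)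
            + ENNReal.ofReal |f (b i0) - f (a i0)| :=
          (Finset.sum_erase_add S _ hi0).symm
      _ ≤ eVariationOn f (Set.Icc 0 (a i0)) + eVariationOn f (Set.Icc (a i0) u) :=
          add_le_add hIH hterm
      _ = eVariationOn f (Set.Icc 0 u) := by
          have := eVariationOn.Icc_add_Icc f (s := Set.univ) hab0.1
            (le_trans (le_of_lt hab0.2.1) hab0.2.2) (Set.mem_univ (a i0))
          simpa using this

/-- abstract version of the estimate in case (a) of the proof of
Theorem 1: products of disjointly supported oscillating functions `f_k` of heights
`h_k` give a function of `Λ^{#}`-variation at most `4 ∑_k h_k² ∑_{j=1}^{m_k} 1/λ_j`. -/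
theorem product_construction_lamSharpBV
    (lam : ℕ → ℝ) (hmono : Monotone lam) (hpos : ∀ n, 0 < lam n)
    (hdiv : Filter.Tendsto (fun k => ∑ j ∈ Finset.range k, 1 / lam j)
      Filter.atTop Filter.atTop)
    (h : ℕ → ℝ) (hh : ∀ k, 0 < h k)
    (m : ℕ → ℕ) (hm : StrictMono m) (hm1 : 1 ≤ m 0)
    (s : ℕ → ℕ)
    (hsum : Summable (fun k => h k ^ 2 * ∑ j ∈ Finset.range (m k), 1 / lam j))
    (fk : ℕ → ℝ → ℝ)
    (hbd : ∀ k x, |fk k x| ≤ h k)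
    (hvar : ∀ k, eVariationOn (fk k) (Set.Icc 0 1) ≤
      ENNReal.ofReal (4 * h k * (m k : ℝ)))
    (hsupp0 : ∀ x : ℝ, fk 0 x ≠ 0 →
      x ∈ Set.Icc (1 / 2 ^ s 0) ((2 * (m 0 : ℝ) + 1) / 2 ^ s 0))
    (hsupp : ∀ (k : ℕ) (x : ℝ), fk (k + 1) x ≠ 0 →
      x ∈ Set.Icc ((2 * (m k : ℝ) - 1) / 2 ^ s (k + 1))
        ((2 * (m (k + 1) : ℝ) + 1) / 2 ^ s (k + 1)))
    (hdisj : ∀ k k' : ℕ, k ≠ k' → ∀ x : ℝ, fk k x = 0 ∨ fk k' x = 0)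
    (hsign : ∀ k j : ℕ,
      MonotoneOn (fk k) (Set.Icc ((j : ℝ) / 2 ^ s k) (((j : ℝ) + 1) / 2 ^ s k)) ∨
      AntitoneOn (fk k) (Set.Icc ((j : ℝ) / 2 ^ s k) (((j : ℝ) + 1) / 2 ^ s k)))
    (hinc : ∀ (k : ℕ) (u v : ℝ), |fk k v - fk k u| ≤ 2 * h k) :
    LamSharpV1 lam (fun x y => ∑' k, fk k x * fk k y)
        (4 * ∑' k, h k ^ 2 * ∑ j ∈ Finset.range (m k), 1 / lam j) ∧
    LamSharpV2 lam (fun x y => ∑' k, fk k x * fk k y)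
        (4 * ∑' k, h k ^ 2 * ∑ j ∈ Finset.range (m k), 1 / lam j) ∧
    LamSharpBV lam (fun x y => ∑' k, fk k x * fk k y) := by
  classical
  set M := 4 * ∑' k, h k ^ 2 * ∑ j ∈ Finset.range (m k), 1 / lam j with hM
  have hterm_nonneg : ∀ k, 0 ≤ h k ^ 2 * ∑ j ∈ Finset.range (m k), 1 / lam j := by
    intro k
    apply mul_nonneg (sq_nonneg _)
    exact Finset.sum_nonneg fun j _ => le_of_lt (div_pos one_pos (hpos j))
  have P1 : LamSharpV1 lam (fun x y => ∑' k, fk k x * fk k y) M := by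
    intro mm a b y hno hy
    let g : ℕ → ℕ := fun i => if hex : ∃ k, fk k (y i) ≠ 0 then hex.choose else 0
    have hgy : ∀ i k, k ≠ g i → fk k (y i) = 0 := by
      intro i k hk
      by_cases hex : ∃ k', fk k' (y i) ≠ 0
      · have hgi : g i = hex.choose := dif_pos hex
        rcases hdisj k (g i) hk (y i) with h0 | h0
        · exact h0
        · exact absurd (hgi ▸ h0) hex.choose_spec
      · push_neg at hex; exact hex k
    have hfeval : ∀ (x : ℝ) (i : ℕ),
        (∑' k, fk k x * fk k (y i)) = fk (g i) x * fk (g i) (y i) :=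
      fun x i => tsum_eq_single (g i) (fun k hk => by rw [hgy i k hk, mul_zero])
    have inner : ∀ k : ℕ, ∑ i ∈ (Finset.range mm).filter (fun i => g i = k),
        |fk k (b i) - fk k (a i)| * |fk k (y i)| / lam i
        ≤ 4 * (h k ^ 2 * ∑ j ∈ Finset.range (m k), 1 / lam j) := by
      intro k
      set S := (Finset.range mm).filter (fun i => g i = k) with hS
      have hSsub : ∀ i ∈ S, i < mm := fun i hi =>
        Finset.mem_range.1 (Finset.mem_filter.1 hi).1
      set d : ℕ → ℝ := fun i => |fk k (b i) - fk k (a i)| with hd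
      have hmassE : ∑ i ∈ S, ENNReal.ofReal (d i)
          ≤ ENNReal.ofReal (4 * h k * (m k : ℝ)) :=
        le_trans (varsum (fk k) a b S 1 (fun i hi => hno.1 i (hSsub i hi))
          (fun i hi j hj hij => hno.2 i (hSsub i hi) j (hSsub j hj) hij)) (hvar k)
      have hmassR : ∑ i ∈ S, d i ≤ 4 * h k * (m k : ℝ) := by
        have h4 : (0:ℝ) ≤ 4 * h k * (m k : ℝ) :=
          mul_nonneg (mul_nonneg (by norm_num) (hh k).le) (Nat.cast_nonneg _)
        rw [← ENNReal.ofReal_sum_of_nonneg (fun i _ => abs_nonneg _)] at hmassE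
        exact (ENNReal.ofReal_le_ofReal_iff h4).1 hmassE
      have hrearr : ∑ i ∈ S, d i * (1 / lam i)
          ≤ (2 * h k) * ∑ j ∈ Finset.range (2 * m k), 1 / lam j := by
        refine rearr (fun j => 1 / lam j) (fun j => le_of_lt (div_pos one_pos (hpos j)))
          (fun i j hij => one_div_le_one_div_of_le (hpos i) (hmono hij))
          (2 * h k) (mul_nonneg (by norm_num) (hh k).le) S d
          (fun i => abs_nonneg _) (fun i => hinc k (a i) (b i)) (2 * m k) ?_
        calc ∑ i ∈ S, d i ≤ 4 * h k * (m k:ℝ) := hmassR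
          _ = 2 * h k * ((2 * m k : ℕ) : ℝ) := by push_cast; ring
      have hdouble : ∑ j ∈ Finset.range (2 * m k), 1 / lam j
          ≤ 2 * ∑ j ∈ Finset.range (m k), 1 / lam j := by
        rw [two_mul (m k), Finset.sum_range_add]
        have : ∑ j ∈ Finset.range (m k), 1 / lam (m k + j)
            ≤ ∑ j ∈ Finset.range (m k), 1 / lam j :=
          Finset.sum_le_sum fun j _ =>
            one_div_le_one_div_of_le (hpos j) (hmono (Nat.le_add_left _ _))
        linarith
      calc ∑ i ∈ S, d i * |fk k (y i)| / lam i
          ≤ ∑ i ∈ S, h k * (d i * (1 / lam i)) := by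
            refine Finset.sum_le_sum fun i hi => ?_
            have h1 : |fk k (y i)| ≤ h k := hbd k (y i)
            have h2 : (0:ℝ) ≤ 1 / lam i := le_of_lt (div_pos one_pos (hpos i))
            rw [div_eq_mul_one_div]
            calc d i * |fk k (y i)| * (1 / lam i) ≤ d i * h k * (1 / lam i) :=
                  mul_le_mul_of_nonneg_right
                    (mul_le_mul_of_nonneg_left h1 (abs_nonneg _)) h2
              _ = h k * (d i * (1 / lam i)) := by ring
        _ = h k * ∑ i ∈ S, d i * (1 / lam i) := (Finset.mul_sum _ _ _).symm
        _ ≤ h k * ((2 * h k) * ∑ j ∈ Finset.range (2 * m k), 1 / lam j) :=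
            mul_le_mul_of_nonneg_left hrearr (hh k).le
        _ ≤ h k * ((2 * h k) * (2 * ∑ j ∈ Finset.range (m k), 1 / lam j)) :=
            mul_le_mul_of_nonneg_left
              (mul_le_mul_of_nonneg_left hdouble
                (mul_nonneg (by norm_num) (hh k).le)) (hh k).le
        _ = 4 * (h k ^ 2 * ∑ j ∈ Finset.range (m k), 1 / lam j) := by ring
    calc ∑ i ∈ Finset.range mm,
          |(∑' k, fk k (b i) * fk k (y i)) - (∑' k, fk k (a i) * fk k (y i))| / lam i
        = ∑ i ∈ Finset.range mm,
            |fk (g i) (b i) - fk (g i) (a i)| * |fk (g i) (y i)| / lam i := by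
          refine Finset.sum_congr rfl fun i _ => ?_
          rw [hfeval (b i) i, hfeval (a i) i, ← sub_mul, abs_mul]
      _ = ∑ k ∈ (Finset.range mm).image g,
            ∑ i ∈ (Finset.range mm).filter (fun i => g i = k),
              |fk (g i) (b i) - fk (g i) (a i)| * |fk (g i) (y i)| / lam i :=
          (Finset.sum_fiberwise_of_maps_to
            (fun i hi => Finset.mem_image_of_mem g hi) _).symm
      _ = ∑ k ∈ (Finset.range mm).image g,
            ∑ i ∈ (Finset.range mm).filter (fun i => g i = k),
              |fk k (b i) - fk k (a i)| * |fk k (y i)| / lam i := by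
          refine Finset.sum_congr rfl fun k _ => Finset.sum_congr rfl fun i hi => ?_
          rw [(Finset.mem_filter.1 hi).2]
      _ ≤ ∑ k ∈ (Finset.range mm).image g,
            4 * (h k ^ 2 * ∑ j ∈ Finset.range (m k), 1 / lam j) :=
          Finset.sum_le_sum fun k _ => inner k
      _ = 4 * ∑ k ∈ (Finset.range mm).image g,
            h k ^ 2 * ∑ j ∈ Finset.range (m k), 1 / lam j :=
          (Finset.mul_sum _ _ _).symm
      _ ≤ M := by
          rw [hM]
          refine mul_le_mul_of_nonneg_left ?_ (by norm_num)
          exact Summable.sum_le_tsum _ (fun k _ => hterm_nonneg k) hsum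
  have hsymm : ∀ x y : ℝ, (∑' k, fk k x * fk k y) = ∑' k, fk k y * fk k x :=
    fun x y => tsum_congr fun k => mul_comm _ _
  have P2 : LamSharpV2 lam (fun x y => ∑' k, fk k x * fk k y) M := by
    intro mm a b x hno hx
    have hP := P1 mm a b x hno hx
    calc ∑ i ∈ Finset.range mm,
          |(∑' k, fk k (x i) * fk k (b i)) - (∑' k, fk k (x i) * fk k (a i))| / lam i
        = ∑ i ∈ Finset.range mm,
            |(∑' k, fk k (b i) * fk k (x i)) - (∑' k, fk k (a i) * fk k (x i))| / lam i := by
          refine Finset.sum_congr rfl fun i _ => ?_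
          rw [hsymm (x i) (b i), hsymm (x i) (a i)]
      _ ≤ M := hP
  exact ⟨P1, P2, ⟨M, P1, P2⟩⟩
end
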